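/- arXiv:2603.06012 — 4 statements merged into one kernel-verified Lean document; each statement's English description precedes it below -/
import Mathlib

section
/- The operator F is Scott-continuous: for every directed set C ⊆ D (with respect to the information order), the supremum of C exists in D and F(⊔C) = ⊔_{p ∈ C} F(p). -/
/-- Membership in the domain `D`: monotone partial halting observations. -/
def InD (p : ℕ → Option Bool) : Prop :=
  ∀ k k', p k = some true → k ≤ k' → p k' = some true

/-- The flat pointwise information order on partial functions. -/
def InfoLe (p q : ℕ → Option Bool) : Prop :=
  ∀ k b, p k = some b → q k = some b

/-- The operator `F` determined by the halting witness `h`. -/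
def F (h : ℕ → Bool) (p : ℕ → Option Bool) : ℕ → Option Bool
  | 0 => some (h 0)
  | k + 1 =>
    match p k with
    | none => none
    | some true => some true
    | some false => some (h (k + 1))

/-- The Kleene chain `p₀ = ⊥`, `p_{n+1} = F p_n`. -/
def chain (h : ℕ → Bool) : ℕ → ℕ → Option Bool
  | 0 => fun _ => none
  | n + 1 => F h (chain h n)

/-- The pointwise supremum of the chain. -/
def pOmega (h : ℕ → Bool) (k : ℕ) : Option Bool := chain h (k + 1) k

/-- `B_T`: elements of `D` defined exactly on `{0, …, T-1}`. -/
def BT (T : ℕ) (p : ℕ → Option Bool) : Prop :=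
  InD p ∧ ∀ k, p k ≠ none ↔ k < T

/-- `s` is the supremum (least upper bound) of `C` w.r.t. the information order. -/
def IsSup (C : Set (ℕ → Option Bool)) (s : ℕ → Option Bool) : Prop :=
  (∀ p ∈ C, InfoLe p s) ∧ ∀ q, (∀ p ∈ C, InfoLe p q) → InfoLe s q

/-- `C` is directed: nonempty and any two elements have an upper bound in `C`. -/
def DirectedSet (C : Set (ℕ → Option Bool)) : Prop :=
  C.Nonempty ∧ ∀ p ∈ C, ∀ q ∈ C, ∃ r ∈ C, InfoLe p r ∧ InfoLe q r

lemma consistent {C : Set (ℕ → Option Bool)} (hdir : DirectedSet C)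
    {p q : ℕ → Option Bool} (hp : p ∈ C) (hq : q ∈ C) {k : ℕ} {b b' : Bool}
    (h1 : p k = some b) (h2 : q k = some b') : b = b' := by
  obtain ⟨r, _, hpr, hqr⟩ := hdir.2 p hp q hq
  have e1 := hpr k b h1
  have e2 := hqr k b' h2
  rw [e1] at e2
  exact Option.some_injective _ e2

open Classical in
noncomputable def supC (C : Set (ℕ → Option Bool)) : ℕ → Option Bool :=
  fun k => if hk : ∃ b : Bool, ∃ p ∈ C, p k = some b then some hk.choose else none

lemma supC_eq {C : Set (ℕ → Option Bool)} (hdir : DirectedSet C)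
    {p : ℕ → Option Bool} (hp : p ∈ C) {k : ℕ} {b : Bool} (hpk : p k = some b) :
    supC C k = some b := by
  have hk : ∃ b : Bool, ∃ p ∈ C, p k = some b := ⟨b, p, hp, hpk⟩
  unfold supC
  rw [dif_pos hk]
  obtain ⟨q, hq, hqk⟩ := hk.choose_spec
  exact congrArg some (consistent hdir hq hp hqk hpk)

lemma supC_some {C : Set (ℕ → Option Bool)} {k : ℕ} {b : Bool}
    (hs : supC C k = some b) : ∃ p ∈ C, p k = some b := by
  unfold supC at hs
  split at hs
  · next hk =>
    obtain ⟨q, hq, hqk⟩ := hk.choose_spec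
    rw [Option.some_injective _ hs] at hqk
    exact ⟨q, hq, hqk⟩
  · exact absurd hs (by simp)

lemma F_mono (h : ℕ → Bool) {p q : ℕ → Option Bool} (hle : InfoLe p q) :
    InfoLe (F h p) (F h q) := by
  intro k b hk
  cases k with
  | zero => simpa [F] using hk
  | succ m =>
    cases hpm : p m with
    | none => simp [F, hpm] at hk
    | some c =>
      have hqm : q m = some c := hle m c hpm
      simp only [F, hpm] at hk
      simp only [F, hqm]
      exact hk

theorem F_scott_continuous (h : ℕ → Bool)
    (hm : ∀ k k', h k = true → k ≤ k' → h k' = true) :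
    ∀ C : Set (ℕ → Option Bool), (∀ p ∈ C, InD p) → DirectedSet C →
      ∃ s : ℕ → Option Bool, InD s ∧ IsSup C s ∧ IsSup (F h '' C) (F h s) := by
  intro C hInD hdir
  refine ⟨supC C, ?_, ⟨?_, ?_⟩, ⟨?_, ?_⟩⟩
  · -- InD
    intro k k' hk hkk'
    obtain ⟨p, hp, hpk⟩ := supC_some hk
    exact supC_eq hdir hp (hInD p hp k k' hpk hkk')
  · -- upper bound
    intro p hp k b hpk
    exact supC_eq hdir hp hpk
  · -- least
    intro q hq k b hk
    obtain ⟨p, hp, hpk⟩ := supC_some hk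
    exact hq p hp k b hpk
  · -- F upper bound
    rintro _ ⟨p, hp, rfl⟩
    exact F_mono h (fun k b hk => supC_eq hdir hp hk)
  · -- F least
    intro q hq k b hk
    cases k with
    | zero =>
      obtain ⟨p, hp⟩ := hdir.1
      have : F h p 0 = some b := by simpa [F] using hk
      exact hq (F h p) ⟨p, hp, rfl⟩ 0 b this
    | succ m =>
      cases hsm : supC C m with
      | none => simp [F, hsm] at hk
      | some c =>
        obtain ⟨p, hp, hpm⟩ := supC_some hsm
        have : F h p (m + 1) = some b := by
          simp only [F, hsm] at hk
          simp only [F, hpm]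
          exact hk
        exact hq (F h p) ⟨p, hp, rfl⟩ (m + 1) b this
end

section
/- Unboundedness of the least fixed point: the supremum p_ω of the chain (p_n), given by p_ω(k) = p_{k+1}(k), satisfies p_ω(k) ≠ none for every k ∈ ℕ; in particular, p_ω does not belong to B_T for any T ∈ ℕ, so p_ω ∉ ⋃_{T ∈ ℕ} B_T. -/
theorem pOmega_unbounded (h : ℕ → Bool)
    (hm : ∀ k k', h k = true → k ≤ k' → h k' = true) :
    (∀ k, pOmega h k ≠ none) ∧
    (∀ T : ℕ, ¬ BT T (pOmega h)) ∧
    pOmega h ∉ ⋃ T : ℕ, {p : ℕ → Option Bool | BT T p} := by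
  have key : ∀ k, pOmega h k ≠ none := by
    intro k
    induction k with
    | zero => simp [pOmega, chain, F]
    | succ n ih =>
      rcases hc : chain h (n + 1) n with _ | b
      · exact absurd hc ih
      · show F h (chain h (n + 1)) (n + 1) ≠ none
        simp only [F, hc]
        cases b <;> simp
  refine ⟨key, ?_, ?_⟩
  · intro T hBT
    exact (hBT.2 T).mp (key T) |>.false
  · intro hmem
    rcases Set.mem_iUnion.mp hmem with ⟨T, hT⟩
    exact (hT.2 T).mp (key T) |>.false
end

section
/- Bounded self-certification fails while the Scott limit succeeds: no element of any B_T is a fixed point of F, whereas p_ω (defined by p_ω(k) = p_{k+1}(k)) satisfies F(p_ω) = p_ω and p_ω ∉ ⋃_{T ∈ ℕ} B_T. -/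
/-!
A fixed point of `F` is total: `F p` is defined at `0`, and `F p` is defined at `k + 1`
exactly when `p` is defined at `k`. An element of `B_T` is undefined at `T`, so it cannot be
a fixed point. The limit `p_ω` is a fixed point because `F p (k + 1)` reads only `p k`, and
`p_ω (k + 1) = F p_{k+1} (k + 1)` with `p_{k+1} k = p_ω k`; being total, it lies in no `B_T`.
-/

open Function

theorem F_succ_congr (h : ℕ → Bool) {p q : ℕ → Option Bool} {k : ℕ} (hpq : p k = q k) :
    F h p (k + 1) = F h q (k + 1) := by
  simp only [F, hpq]

theorem F_succ_eq_none_iff (h : ℕ → Bool) (p : ℕ → Option Bool) (k : ℕ) :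
    F h p (k + 1) = none ↔ p k = none := by
  simp only [F]
  split <;> simp_all

theorem ne_none_of_isFixedPt {h : ℕ → Bool} {p : ℕ → Option Bool} (hp : IsFixedPt (F h) p)
    (k : ℕ) : p k ≠ none := by
  induction k with
  | zero => rw [← hp]; simp [F]
  | succ k ih => rw [← hp, Ne, F_succ_eq_none_iff]; exact ih

theorem not_BT_of_isFixedPt {h : ℕ → Bool} {p : ℕ → Option Bool} (hp : IsFixedPt (F h) p)
    (T : ℕ) : ¬BT T p :=
  fun hB => lt_irrefl T ((hB.2 T).1 (ne_none_of_isFixedPt hp T))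

theorem isFixedPt_pOmega (h : ℕ → Bool) : IsFixedPt (F h) (pOmega h) := by
  funext k
  cases k with
  | zero => rfl
  | succ k => exact F_succ_congr h rfl

theorem bounded_fails_limit_succeeds_general (h : ℕ → Bool) :
    (∀ T : ℕ, ∀ p : ℕ → Option Bool, BT T p → F h p ≠ p) ∧
    F h (pOmega h) = pOmega h ∧
    pOmega h ∉ ⋃ T : ℕ, {p : ℕ → Option Bool | BT T p} := by
  refine ⟨fun T p hB hfix => not_BT_of_isFixedPt hfix T hB, isFixedPt_pOmega h, ?_⟩
  simp only [Set.mem_iUnion, Set.mem_ofPred_eq, not_exists]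
  exact not_BT_of_isFixedPt (isFixedPt_pOmega h)

theorem bounded_fails_limit_succeeds (h : ℕ → Bool)
    (hm : ∀ k k', h k = true → k ≤ k' → h k' = true) :
    (∀ T : ℕ, ∀ p : ℕ → Option Bool, BT T p → F h p ≠ p) ∧
    F h (pOmega h) = pOmega h ∧
    pOmega h ∉ ⋃ T : ℕ, {p : ℕ → Option Bool | BT T p} :=
  bounded_fails_limit_succeeds_general h
end

section
/- Correctness of the least fixed point: for every k ∈ ℕ, p_ω(k) = some (h k); that is, the limit of the chain is the complete, correct halting observation of the machine. -/
theorem pOmega_correct (h : ℕ → Bool)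
    (hm : ∀ k k', h k = true → k ≤ k' → h k' = true) :
    ∀ k, pOmega h k = some (h k) := by
  intro k
  induction k with
  | zero => rfl
  | succ k ih =>
    show F h (chain h (k + 1)) (k + 1) = some (h (k + 1))
    have : chain h (k + 1) k = some (h k) := ih
    simp only [F, this]
    cases hk : h k with
    | false => rfl
    | true => simp [hm k (k+1) hk (Nat.le_succ k)]
end
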